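/- The three submodules R(t,e), R(f,e), R(s,e) pairwise intersect in exactly the set {0} × I_l; that is, R(t,e) ∩ R(f,e) = R(f,e) ∩ R(s,e) = R(t,e) ∩ R(s,e) = {(0, x) : x ∈ I_l}, a set of 8 vectors. -/

import Mathlib

open Matrix

/-- The matrix m(a,b,c,d) = [[a,c,d],[0,b,0],[0,0,b]] over GF(2). -/
def m (a b c d : ZMod 2) : Matrix (Fin 3) (Fin 3) (ZMod 2) :=
  !![a, c, d; 0, b, 0; 0, 0, b]

lemma m_mul (a b c d a' b' c' d' : ZMod 2) :
    m a b c d * m a' b' c' d' =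
      m (a * a') (b * b') (a * c' + c * b') (a * d' + d * b') := by
  ext i j
  fin_cases i <;> fin_cases j <;>
    simp [m, Matrix.mul_apply, Fin.sum_univ_three, Matrix.vecHead, Matrix.vecTail]

/-- The ring R, as a subring of the 3×3 matrices over GF(2). -/
def Rring : Subring (Matrix (Fin 3) (Fin 3) (ZMod 2)) where
  carrier := {A | ∃ a b c d : ZMod 2, A = m a b c d}
  zero_mem' := ⟨0, 0, 0, 0, by ext i j; fin_cases i <;> fin_cases j <;> simp [m, Matrix.vecHead, Matrix.vecTail]⟩
  one_mem' := ⟨1, 1, 0, 0, by ext i j; fin_cases i <;> fin_cases j <;> simp [m, Matrix.one_apply, Matrix.vecHead, Matrix.vecTail]⟩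
  add_mem' := by
    rintro A B ⟨a, b, c, d, rfl⟩ ⟨a', b', c', d', rfl⟩
    exact ⟨a + a', b + b', c + c', d + d',
      by ext i j; fin_cases i <;> fin_cases j <;> simp [m, Matrix.vecHead, Matrix.vecTail]⟩
  neg_mem' := by
    rintro A ⟨a, b, c, d, rfl⟩
    exact ⟨-a, -b, -c, -d,
      by ext i j; fin_cases i <;> fin_cases j <;> simp [m, Matrix.vecHead, Matrix.vecTail]⟩
  mul_mem' := by
    rintro A B ⟨a, b, c, d, rfl⟩ ⟨a', b', c', d', rfl⟩
    exact ⟨a * a', b * b', a * c' + c * b', a * d' + d * b', m_mul a b c d a' b' c' d'⟩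

lemma m_mem (a b c d : ZMod 2) : m a b c d ∈ Rring := ⟨a, b, c, d, rfl⟩

/-- The element m(a,b,c,d) viewed as an element of the ring R. -/
def mm (a b c d : ZMod 2) : Rring := ⟨m a b c d, m_mem a b c d⟩

/-- The cyclic left submodule R(x,y) = {(αx, αy) : α ∈ R} of R², as a set of vectors. -/
def RM (x y : Rring) : Set (Rring × Rring) := {p | ∃ α : Rring, p = (α * x, α * y)}

def t : Rring := mm 0 0 1 0
def f : Rring := mm 0 0 1 1
def s : Rring := mm 0 0 0 1
def e : Rring := mm 0 1 0 0
def u : Rring := mm 0 1 1 0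
def v : Rring := mm 0 1 1 1
def w : Rring := mm 0 1 0 1

/-- The nine distinguished generators. -/
def gens : List (Rring × Rring) :=
  [(t, e), (f, e), (s, e), (e, u), (e, v), (e, w), (e, s), (e, f), (e, t)]

/-- The set I_l = {m(0,b,c,d) : b,c,d ∈ GF(2)}, as a subset of R. -/
def Il : Set Rring := {x | ∃ b c d : ZMod 2, x = mm 0 b c d}

lemma mm_mul (a b c d a' b' c' d' : ZMod 2) :
    mm a b c d * mm a' b' c' d' =
      mm (a * a') (b * b') (a * c' + c * b') (a * d' + d * b') :=
  Subtype.ext (m_mul a b c d a' b' c' d')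

lemma mm_injective : Function.Injective fun x : ZMod 2 × ZMod 2 × ZMod 2 × ZMod 2 ↦
    mm x.1 x.2.1 x.2.2.1 x.2.2.2 := by
  rintro ⟨a, b, c, d⟩ ⟨a', b', c', d'⟩ h
  have hm := congrArg Subtype.val h
  simp only [Prod.mk.injEq]
  exact ⟨congrFun₂ hm 0 0, congrFun₂ hm 1 1, congrFun₂ hm 0 1, congrFun₂ hm 0 2⟩

lemma exists_eq_mm (α : Rring) : ∃ a b c d : ZMod 2, α = mm a b c d := by
  obtain ⟨a, b, c, d, h⟩ := α.2
  exact ⟨a, b, c, d, Subtype.ext h⟩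

lemma mm_zero : mm 0 0 0 0 = 0 := by
  apply Subtype.ext
  ext i j
  fin_cases i <;> fin_cases j <;> simp [mm, m]

lemma mm_mul_e (a b c d : ZMod 2) : mm a b c d * e = mm 0 b c d := by
  simpa [e] using mm_mul a b c d 0 1 0 0

lemma mm_mul_mm_zero_zero (a b c d c' d' : ZMod 2) :
    mm a b c d * mm 0 0 c' d' = mm 0 0 (a * c') (a * d') := by
  simpa using mm_mul a b c d 0 0 c' d'

lemma ncard_Il : Il.ncard = 8 := by
  have hIl : Il = Set.range fun x : ZMod 2 × ZMod 2 × ZMod 2 ↦ mm 0 x.1 x.2.1 x.2.2 := by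
    ext y
    simp [Il, eq_comm]
  have hinj : Function.Injective fun x : ZMod 2 × ZMod 2 × ZMod 2 ↦ mm 0 x.1 x.2.1 x.2.2 :=
    fun x y h ↦ by simpa using mm_injective (a₁ := (0, x)) (a₂ := (0, y)) h
  rw [hIl, Set.ncard_range_of_injective hinj]
  simp

/-- `m(a,b,c',d')` sends `(m(0,0,c,d), e)` to `(a • m(0,0,c,d), m(0,b,c',d'))`, so the two
coordinates of `R(m(0,0,c,d), e)` vary independently. -/
lemma RM_mm_zero_zero_e (c d : ZMod 2) :
    RM (mm 0 0 c d) e = ({0, mm 0 0 c d} : Set Rring) ×ˢ Il := by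
  ext ⟨p, q⟩
  simp only [RM, Il, Set.mem_ofPred_eq, Set.mem_prod, Set.mem_insert_iff,
    Set.mem_singleton_iff, Prod.mk.injEq]
  constructor
  · rintro ⟨α, rfl, rfl⟩
    obtain ⟨a, b, c', d', rfl⟩ := exists_eq_mm α
    rw [mm_mul_mm_zero_zero, mm_mul_e]
    refine ⟨?_, b, c', d', rfl⟩
    obtain rfl | rfl : a = 0 ∨ a = 1 := by decide +revert
    exacts [Or.inl (by simp [mm_zero]), Or.inr (by simp)]
  · rintro ⟨hp, b, c', d', rfl⟩
    obtain ⟨a, ha⟩ : ∃ a : ZMod 2, p = mm 0 0 (a * c) (a * d) :=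
      hp.elim (fun h ↦ ⟨0, by simp [h, mm_zero]⟩) (fun h ↦ ⟨1, by simp [h]⟩)
    exact ⟨mm a b c' d', by rw [mm_mul_mm_zero_zero, ha], by rw [mm_mul_e]⟩

lemma RM_inter_RM_of_ne {c d c' d' : ZMod 2} (h : mm 0 0 c d ≠ mm 0 0 c' d') :
    RM (mm 0 0 c d) e ∩ RM (mm 0 0 c' d') e = ({0} : Set Rring) ×ˢ Il := by
  rw [RM_mm_zero_zero_e, RM_mm_zero_zero_e, Set.prod_inter_prod, Set.inter_self,
    ← Set.insert_inter_distrib, (Set.singleton_inter_eq_empty (s := {mm 0 0 c' d'})).2 h,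
    insert_empty_eq]

/-- The submodules R(t,e), R(f,e), R(s,e) pairwise intersect in exactly the set
{0} × I_l, a set of 8 vectors. -/
theorem pairwise_intersections_first_triple :
    RM t e ∩ RM f e = {p : Rring × Rring | ∃ x ∈ Il, p = (0, x)} ∧
    RM f e ∩ RM s e = {p : Rring × Rring | ∃ x ∈ Il, p = (0, x)} ∧
    RM t e ∩ RM s e = {p : Rring × Rring | ∃ x ∈ Il, p = (0, x)} ∧
    {p : Rring × Rring | ∃ x ∈ Il, p = (0, x)}.ncard = 8 := by
  have hprod : {p : Rring × Rring | ∃ x ∈ Il, p = (0, x)} = ({0} : Set Rring) ×ˢ Il := by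
    rw [Set.singleton_prod]
    ext p
    simp only [Set.mem_ofPred_eq, Set.mem_image]
    exact exists_congr fun x ↦ and_congr_right fun _ ↦ eq_comm
  have hne : ∀ {c d c' d' : ZMod 2}, (c, d) ≠ (c', d') → mm 0 0 c d ≠ mm 0 0 c' d' :=
    fun h h' ↦ h (by simpa using mm_injective (a₁ := (0, 0, _, _)) (a₂ := (0, 0, _, _)) h')
  rw [hprod, Set.ncard_prod, Set.ncard_singleton, ncard_Il]
  exact ⟨RM_inter_RM_of_ne (hne (by decide)), RM_inter_RM_of_ne (hne (by decide)),
    RM_inter_RM_of_ne (hne (by decide)), rfl⟩
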